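/- Let d be a nonnegative integer and q > 0. If f(x) = Σ_{j=0}^d a_j (1-x)^j (x+1)^{d-j} with all a_j ≥ 0, then (max_{x ∈ [-1,1]} f(x))^q ≤ ((qd+1)/2) ∫_{-1}^1 f(x)^q dx. -/

import Mathlib

/-!
Let `x₀` maximise `f` on `[-1, 1]`. Comparing the Lorentz representations term by term gives
`(1 - x)^d f(x₀) ≤ (1 - x₀)^d f(x)` for `x₀ ≤ x ≤ 1`, so integrating `f^q` over `[x₀, 1]` gives at
least `f(x₀)^q (1 - x₀) / (qd + 1)`. Reflecting `x ↦ -x` (which reverses the coefficients) gives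
`f(x₀)^q (1 + x₀) / (qd + 1)` on `[-1, x₀]`, and the two bounds add up to the claim.
-/

open Finset MeasureTheory

theorem integral_sub_rpow (a b : ℝ) {p : ℝ} (hp : -1 < p) :
    ∫ x in a..b, (b - x) ^ p = (b - a) ^ (p + 1) / (p + 1) := by
  rw [intervalIntegral.integral_comp_sub_left (fun y => y ^ p), sub_self,
    integral_rpow (Or.inl hp), Real.zero_rpow (by linarith), sub_zero]

theorem mul_sub_le_integral_of_mul_rpow_le {a b p M : ℝ} {g : ℝ → ℝ} (hab : a ≤ b) (hp : -1 < p)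
    (hg : IntervalIntegrable g volume a b)
    (h : ∀ x ∈ Set.Icc a b, M * (b - x) ^ p ≤ (b - a) ^ p * g x) :
    M * (b - a) ≤ (p + 1) * ∫ x in a..b, g x := by
  rcases hab.eq_or_lt with rfl | hab
  · simp
  have hba : 0 < b - a := sub_pos.2 hab
  have hp1 : 0 < p + 1 := by linarith
  have hint : IntervalIntegrable (fun x => (b - x) ^ p) volume a b := by
    simpa using (intervalIntegral.intervalIntegrable_rpow' hp (a := b - a) (b := 0)).comp_sub_left b
  have hmono := intervalIntegral.integral_mono_on hab.le (hint.const_mul M) (hg.const_mul _) h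
  rw [intervalIntegral.integral_const_mul, intervalIntegral.integral_const_mul,
    integral_sub_rpow a b hp, Real.rpow_add_one hba.ne'] at hmono
  have hpow : 0 < (b - a) ^ p := Real.rpow_pos_of_pos hba p
  rw [← mul_le_mul_iff_right₀ (div_pos hpow hp1)]
  calc (b - a) ^ p / (p + 1) * (M * (b - a)) = M * ((b - a) ^ p * (b - a) / (p + 1)) := by ring
    _ ≤ (b - a) ^ p * ∫ x in a..b, g x := hmono
    _ = _ := by field_simp

noncomputable def lorentzPoly (d : ℕ) (A : ℕ → ℝ) (x : ℝ) : ℝ :=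
  ∑ j ∈ range (d + 1), A j * (1 - x) ^ j * (x + 1) ^ (d - j)

section LorentzPoly

variable {d : ℕ} {A : ℕ → ℝ}

theorem continuous_lorentzPoly : Continuous (lorentzPoly d A) := by
  unfold lorentzPoly
  fun_prop

theorem lorentzPoly_nonneg (hA : ∀ j ≤ d, 0 ≤ A j) {x : ℝ} (hx : x ∈ Set.Icc (-1) 1) :
    0 ≤ lorentzPoly d A x := by
  refine sum_nonneg fun j hj => ?_
  have := hA j (Nat.lt_succ_iff.mp (mem_range.mp hj))
  have : 0 ≤ 1 - x := by linarith [hx.2]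
  have : 0 ≤ x + 1 := by linarith [hx.1]
  positivity

theorem lorentzPoly_neg (x : ℝ) : lorentzPoly d A (-x) = lorentzPoly d (fun j => A (d - j)) x := by
  rw [lorentzPoly, lorentzPoly, ← sum_range_reflect]
  refine sum_congr rfl fun j hj => ?_
  have hj : j ≤ d := Nat.lt_succ_iff.mp (mem_range.mp hj)
  rw [show d + 1 - 1 - j = d - j by omega, Nat.sub_sub_self hj]
  ring

theorem one_sub_pow_mul_lorentzPoly_le (hA : ∀ j ≤ d, 0 ≤ A j) {x₀ x : ℝ} (hx₀ : -1 ≤ x₀)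
    (hx₀x : x₀ ≤ x) (hx : x ≤ 1) :
    (1 - x) ^ d * lorentzPoly d A x₀ ≤ (1 - x₀) ^ d * lorentzPoly d A x := by
  rw [lorentzPoly, lorentzPoly, mul_sum, mul_sum]
  refine sum_le_sum fun j hj => ?_
  have hj : j ≤ d := Nat.lt_succ_iff.mp (mem_range.mp hj)
  have := hA j hj
  have : 0 ≤ 1 - x := by linarith
  have : 0 ≤ 1 - x₀ := by linarith
  have : 0 ≤ x₀ + 1 := by linarith
  -- `(1 - x₀) (x + 1) - (1 - x) (x₀ + 1) = 2 (x - x₀)`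
  have key : ((1 - x) * (x₀ + 1)) ^ (d - j) ≤ ((1 - x₀) * (x + 1)) ^ (d - j) :=
    pow_le_pow_left₀ (by positivity) (by nlinarith) _
  have split (y : ℝ) : (1 - y) ^ d = (1 - y) ^ j * (1 - y) ^ (d - j) := by
    rw [← pow_add, Nat.add_sub_cancel' hj]
  calc (1 - x) ^ d * (A j * (1 - x₀) ^ j * (x₀ + 1) ^ (d - j))
      = A j * (1 - x) ^ j * (1 - x₀) ^ j * ((1 - x) * (x₀ + 1)) ^ (d - j) := by
        rw [split, mul_pow]; ring
    _ ≤ A j * (1 - x) ^ j * (1 - x₀) ^ j * ((1 - x₀) * (x + 1)) ^ (d - j) := by gcongr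
    _ = (1 - x₀) ^ d * (A j * (1 - x) ^ j * (x + 1) ^ (d - j)) := by
        rw [split, mul_pow]; ring

theorem lorentzPoly_rpow_mul_one_sub_le_integral (hA : ∀ j ≤ d, 0 ≤ A j) {q x₀ : ℝ} (hq : 0 ≤ q)
    (hx₀ : x₀ ∈ Set.Icc (-1) 1) :
    lorentzPoly d A x₀ ^ q * (1 - x₀) ≤ (q * d + 1) * ∫ x in x₀..1, lorentzPoly d A x ^ q := by
  refine mul_sub_le_integral_of_mul_rpow_le hx₀.2 (by nlinarith [d.cast_nonneg (α := ℝ)])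
    ((continuous_lorentzPoly.rpow_const fun _ => Or.inr hq).intervalIntegrable _ _)
    fun x hx => ?_
  have h1x : 0 ≤ 1 - x := by linarith [hx.2]
  have h1x₀ : 0 ≤ 1 - x₀ := by linarith [hx.1]
  have hf₀ := lorentzPoly_nonneg hA hx₀
  have hf := lorentzPoly_nonneg hA ⟨hx₀.1.trans hx.1, hx.2⟩
  have := Real.rpow_le_rpow (by positivity)
    (one_sub_pow_mul_lorentzPoly_le hA hx₀.1 hx.1 hx.2) hq
  rwa [Real.mul_rpow (by positivity) hf₀, Real.mul_rpow (by positivity) hf,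
    ← Real.rpow_natCast_mul h1x, ← Real.rpow_natCast_mul h1x₀, mul_comm (d : ℝ), mul_comm] at this

theorem lorentzPoly_rpow_mul_add_one_le_integral (hA : ∀ j ≤ d, 0 ≤ A j) {q x₀ : ℝ} (hq : 0 ≤ q)
    (hx₀ : x₀ ∈ Set.Icc (-1) 1) :
    lorentzPoly d A x₀ ^ q * (x₀ + 1) ≤ (q * d + 1) * ∫ x in (-1)..x₀, lorentzPoly d A x ^ q := by
  have h := lorentzPoly_rpow_mul_one_sub_le_integral (d := d) (A := fun j => A (d - j))
    (fun j _ => hA _ (d.sub_le j)) hq (x₀ := -x₀) ⟨by linarith [hx₀.2], by linarith [hx₀.1]⟩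
  simp only [← lorentzPoly_neg, neg_neg] at h
  rwa [intervalIntegral.integral_comp_neg (fun x => lorentzPoly d A x ^ q), neg_neg,
    sub_neg_eq_add, add_comm] at h

end LorentzPoly

theorem sup_pow_le_integral (d : ℕ) (q : ℝ) (hq : 0 < q)
    (f : ℝ → ℝ) (A : ℕ → ℝ) (hA : ∀ j ≤ d, 0 ≤ A j)
    (hf : ∀ x : ℝ, f x = ∑ j ∈ range (d + 1), A j * (1 - x) ^ j * (x + 1) ^ (d - j)) :
    (⨆ x : Set.Icc (-1 : ℝ) 1, f x) ^ q ≤ ((q * d + 1) / 2) * ∫ x in (-1 : ℝ)..1, f x ^ q := by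
  obtain rfl : f = lorentzPoly d A := funext hf
  obtain ⟨x₀, hx₀, hmax⟩ := (isCompact_Icc (a := (-1 : ℝ)) (b := 1)).exists_isMaxOn
    (Set.nonempty_Icc.2 (by norm_num)) (continuous_lorentzPoly (d := d) (A := A)).continuousOn
  have hint : ∀ a b : ℝ, IntervalIntegrable (fun x => lorentzPoly d A x ^ q) volume a b :=
    fun _ _ => (continuous_lorentzPoly.rpow_const fun _ => Or.inr hq.le).intervalIntegrable _ _
  rw [hmax.iSup_eq hx₀,
    ← intervalIntegral.integral_add_adjacent_intervals (hint (-1) x₀) (hint x₀ 1)]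
  linear_combination (lorentzPoly_rpow_mul_add_one_le_integral hA hq.le hx₀ +
    lorentzPoly_rpow_mul_one_sub_le_integral hA hq.le hx₀) / 2
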